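/- Fixed-metabolite optimality theorem: Fix x̄ and set κ = κ(x̄,p), τ = σ(κ). Consider minimizing Σ_{r∈supp(κ)} w_r f_r/κ_r over flux modes f ∈ C with σ(f) ≤ τ and f_{r*} = 1. If this problem is feasible, then its minimum is attained at some f that is an elementary flux mode (with f_{r*} = 1), and the minimum value equals min over EFMs e conforming to τ with e_{r*} = 1 of g_e = Σ_{r∈supp(κ)} w_r e_r/κ_r. -/

import Mathlib

def fluxCone {S R : Type*} [Fintype R] (N : Matrix S R ℝ) (Rirr : Set R) :
    Set (R → ℝ) :=
  {f | N.mulVec f = 0 ∧ ∀ r ∈ Rirr, 0 ≤ f r}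

def IsEFM {S R : Type*} [Fintype R] (N : Matrix S R ℝ) (Rirr : Set R)
    (e : R → ℝ) : Prop :=
  e ∈ fluxCone N Rirr ∧ e ≠ 0 ∧
    ∀ g ∈ fluxCone N Rirr, g ≠ 0 →
      Function.support g ⊆ Function.support e →
      Function.support g = Function.support e

def Conforms {R : Type*} (x y : R → ℝ) : Prop :=
  ∀ r, x r = 0 ∨ (0 < x r ∧ 0 < y r) ∨ (x r < 0 ∧ y r < 0)

/-!
Along a line `f + t • g` through a feasible flux `f`, in the direction of a steady-state flux `g`
whose support is strictly smaller, both the cost and the coordinate `rstar` are affine in `t`, so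
their ratio is monotone. Moving in the direction where the ratio does not increase until the line
leaves the sign face of `f` (or, if it never does, taking `g` itself) and rescaling gives a
feasible flux with strictly smaller support and no larger cost; iterating ends at an EFM. Two
conforming EFMs with the same support are proportional, so there are only finitely many feasible
EFMs, and the cheapest of them is optimal.
-/

open Function Finset Matrix

section Conforms

variable {R : Type*} {x y z : R → ℝ}

theorem conforms_iff_mul_nonneg :
    Conforms x y ↔ ∀ r, (y r = 0 → x r = 0) ∧ 0 ≤ x r * y r := by
  refine forall_congr' fun r => ⟨?_, fun ⟨hy, hxy⟩ => ?_⟩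
  · rintro (h | h | h)
    · simp [h]
    · exact ⟨fun h' => absurd h' h.2.ne', (mul_pos h.1 h.2).le⟩
    · exact ⟨fun h' => absurd h' h.2.ne, (mul_pos_of_neg_of_neg h.1 h.2).le⟩
  · rcases hxy.eq_or_lt with h | h
    · exact .inl ((mul_eq_zero.1 h.symm).elim id hy)
    · exact .inr (mul_pos_iff.1 h)

theorem Conforms.refl (x : R → ℝ) : Conforms x x :=
  conforms_iff_mul_nonneg.2 fun _ => ⟨id, mul_self_nonneg _⟩

theorem Conforms.trans (hxy : Conforms x y) (hyz : Conforms y z) : Conforms x z := fun r => by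
  rcases hxy r with h | ⟨hx, hy⟩ | ⟨hx, hy⟩ <;> rcases hyz r with h' | ⟨hy', hz⟩ | ⟨hy', hz⟩
  all_goals first
    | exact .inl h
    | exact .inr (.inl ⟨hx, hz⟩)
    | exact .inr (.inr ⟨hx, hz⟩)
    | (exfalso; linarith)

theorem Conforms.support_subset (h : Conforms x y) : support x ⊆ support y :=
  fun r hx hy => hx ((conforms_iff_mul_nonneg.1 h r).1 hy)

theorem Conforms.smul (h : Conforms x y) {c : ℝ} (hc : 0 < c) : Conforms (c • x) y :=
  conforms_iff_mul_nonneg.2 fun r => by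
    obtain ⟨hy, hxy⟩ := conforms_iff_mul_nonneg.1 h r
    refine ⟨fun h0 => by simp [hy h0], ?_⟩
    simpa [mul_assoc] using mul_nonneg hc.le hxy

theorem Conforms.of_support_subset (hx : Conforms x z) (hy : Conforms y z)
    (hxy : support x ⊆ support y) : Conforms x y := fun r => by
  by_cases hxr : x r = 0
  · exact .inl hxr
  have hyr : y r ≠ 0 := hxy hxr
  rcases hx r with h | ⟨hx, hz⟩ | ⟨hx, hz⟩ <;> rcases hy r with h' | ⟨hy, hz'⟩ | ⟨hy, hz'⟩
  all_goals first
    | contradiction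
    | exact .inr (.inl ⟨hx, hy⟩)
    | exact .inr (.inr ⟨hx, hy⟩)
    | (exfalso; linarith)

theorem Conforms.div_pos (h : Conforms x y) {r : R} (hx : x r ≠ 0) : 0 < x r / y r :=
  div_pos_iff.2 ((h r).resolve_left hx)

theorem exists_conforms_add_smul_of_not_conforms [Fintype R] {f g : R → ℝ}
    (hgf : support g ⊆ support f) (hnc : ¬ Conforms g f) :
    ∃ t : ℝ, 0 < t ∧ Conforms (f + t • g) f ∧ ∃ r, f r ≠ 0 ∧ (f + t • g) r = 0 := by
  set T := univ.filter fun r => g r * f r < 0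
  have hT : T.Nonempty := by
    simp only [conforms_iff_mul_nonneg, not_forall, not_and_or, not_le] at hnc
    obtain ⟨r, ⟨hf, hg⟩ | h⟩ := hnc
    · exact absurd (hgf hg) (not_not.2 hf)
    · exact ⟨r, mem_filter.2 ⟨mem_univ r, h⟩⟩
  -- the first `t` at which some coordinate where `g` opposes `f` reaches zero
  obtain ⟨r₀, hr₀T, ht⟩ := exists_mem_eq_inf' hT fun r => -f r / g r
  set t := T.inf' hT fun r => -f r / g r
  have hr₀ : g r₀ * f r₀ < 0 := (mem_filter.1 hr₀T).2
  have hg₀ : g r₀ ≠ 0 := left_ne_zero_of_mul hr₀.ne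
  have ht₀ : 0 < t := by
    rw [ht, show -f r₀ / g r₀ = -(g r₀ * f r₀) / g r₀ ^ 2 by field_simp]
    exact div_pos (neg_pos.2 hr₀) (by positivity)
  refine ⟨t, ht₀, conforms_iff_mul_nonneg.2 fun r => ⟨fun hf => ?_, ?_⟩, r₀,
    right_ne_zero_of_mul hr₀.ne, by simp [ht, div_mul_cancel₀ _ hg₀]⟩
  · simp [hf, not_not.1 fun hg => hgf hg hf]
  · show 0 ≤ (f r + t * g r) * f r
    rcases le_or_gt 0 (g r * f r) with h | h
    · nlinarith [mul_self_nonneg (f r)]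
    · have hle : t ≤ -f r / g r := inf'_le _ (mem_filter.2 ⟨mem_univ r, h⟩)
      have hg : g r ≠ 0 := left_ne_zero_of_mul h.ne
      have := mul_le_mul_of_nonpos_right hle h.le
      rw [show -f r / g r * (g r * f r) = -(f r * f r) by field_simp] at this
      nlinarith

theorem exists_conforms_smul_add_smul_support_ssubset [Fintype R] {f d : R → ℝ}
    (hd0 : d ≠ 0) (hdf : support d ⊂ support f) :
    ∃ a b : ℝ, 0 ≤ a ∧ 0 ≤ b ∧ a • f + b • d ≠ 0 ∧ Conforms (a • f + b • d) f ∧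
      support (a • f + b • d) ⊂ support f := by
  by_cases hdc : Conforms d f
  · exact ⟨0, 1, le_rfl, zero_le_one, by simpa using hd0, by simpa using hdc, by simpa using hdf⟩
  obtain ⟨t, ht, hc, r₀, hr₀, hr₀'⟩ := exists_conforms_add_smul_of_not_conforms hdf.subset hdc
  obtain ⟨r₁, hr₁, hr₁'⟩ := Set.exists_of_ssubset hdf
  refine ⟨1, t, zero_le_one, ht.le, ?_, by simpa using hc, ?_⟩
  · rw [one_smul]
    intro h0
    exact hr₁ (by simpa [notMem_support.1 hr₁'] using congrFun h0 r₁)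
  · rw [one_smul]
    exact (Set.ssubset_iff_of_subset hc.support_subset).2 ⟨r₀, hr₀, fun h => h hr₀'⟩

end Conforms

def feasibleSet {S R : Type*} [Fintype R] (N : Matrix S R ℝ) (Rirr : Set R) (κ : R → ℝ)
    (rstar : R) : Set (R → ℝ) :=
  {f | f ∈ fluxCone N Rirr ∧ Conforms f κ ∧ f rstar = 1}

section FluxCone

variable {S R : Type*} [Fintype R] {N : Matrix S R ℝ} {Rirr : Set R}

theorem Conforms.mem_fluxCone {h f : R → ℝ} (hhf : Conforms h f) (hf : f ∈ fluxCone N Rirr)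
    (hN : N *ᵥ h = 0) : h ∈ fluxCone N Rirr :=
  ⟨hN, fun r hr => by
    rcases hhf r with h0 | ⟨hpos, _⟩ | ⟨_, hneg⟩
    · exact h0.ge
    · exact hpos.le
    · exact absurd (hf.2 r hr) hneg.not_ge⟩

theorem IsEFM.eq_smul_of_conforms {e g : R → ℝ} (he : IsEFM N Rirr e) (hN : N *ᵥ g = 0)
    (hg0 : g ≠ 0) (hge : Conforms g e) : ∃ t : ℝ, 0 < t ∧ e = t • g := by
  have hnc : ¬ Conforms (-g) e := fun hc => by
    obtain ⟨r, hr⟩ := Function.ne_iff.1 hg0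
    have h₁ := mul_pos_iff.2 ((hge r).resolve_left hr)
    have h₂ := mul_pos_iff.2 ((hc r).resolve_left (neg_ne_zero.2 hr))
    rw [Pi.neg_apply, neg_mul] at h₂
    linarith
  obtain ⟨t, ht, hc, r₀, hr₀, hr₀'⟩ :=
    exists_conforms_add_smul_of_not_conforms (by simpa using hge.support_subset) hnc
  have hmem : e + t • -g ∈ fluxCone N Rirr :=
    hc.mem_fluxCone he.1 (by rw [mulVec_add, mulVec_smul, mulVec_neg, he.1.1, hN, neg_zero,
      smul_zero, add_zero])
  have h0 : e + t • -g = 0 := by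
    by_contra hne
    have hr₀_mem : r₀ ∈ support (e + t • -g) := he.2.2 _ hmem hne hc.support_subset ▸ hr₀
    exact hr₀_mem hr₀'
  exact ⟨t, ht, by rwa [smul_neg, ← sub_eq_add_neg, sub_eq_zero] at h0⟩

variable {κ : R → ℝ} {rstar : R} {φ : (R → ℝ) →ₗ[ℝ] ℝ}

theorem exists_mem_feasibleSet_of_conforms
    (hφ : ∀ f ∈ fluxCone N Rirr, Conforms f κ → f ≠ 0 → 0 < φ f) {f h : R → ℝ}
    (hf : f ∈ feasibleSet N Rirr κ rstar) (hN : N *ᵥ h = 0) (hhf : Conforms h f) (hh0 : h ≠ 0)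
    (hφh : φ h ≤ φ f * h rstar) :
    ∃ f' ∈ feasibleSet N Rirr κ rstar, φ f' ≤ φ f ∧ support f' = support h := by
  have hhκ : Conforms h κ := hhf.trans hf.2.1
  have hmem : h ∈ fluxCone N Rirr := hhf.mem_fluxCone hf.1 hN
  have hstar : 0 < h rstar := by
    have hnonneg := (conforms_iff_mul_nonneg.1 hhf rstar).2
    rw [hf.2.2, mul_one] at hnonneg
    refine hnonneg.lt_of_ne fun h0 => ?_
    rw [← h0, mul_zero] at hφh
    exact hφh.not_gt (hφ h hmem hhκ hh0)
  have hc : 0 < (h rstar)⁻¹ := inv_pos.2 hstar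
  refine ⟨(h rstar)⁻¹ • h, ⟨((Conforms.refl h).smul hc).mem_fluxCone hmem
    (by rw [mulVec_smul, hN, smul_zero]), hhκ.smul hc, by simp [hstar.ne']⟩, ?_,
    support_const_smul_of_ne_zero _ _ hc.ne'⟩
  rw [map_smul, smul_eq_mul, inv_mul_le_iff₀ hstar, mul_comm]
  exact hφh

theorem exists_mem_feasibleSet_le_support_ssubset
    (hφ : ∀ f ∈ fluxCone N Rirr, Conforms f κ → f ≠ 0 → 0 < φ f) {f : R → ℝ}
    (hf : f ∈ feasibleSet N Rirr κ rstar) (hfe : ¬ IsEFM N Rirr f) :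
    ∃ f' ∈ feasibleSet N Rirr κ rstar, φ f' ≤ φ f ∧ support f' ⊂ support f := by
  have hf0 : f ≠ 0 := fun h => by simpa [h] using hf.2.2
  obtain ⟨g, hg, hg0, hgf, hgf'⟩ : ∃ g ∈ fluxCone N Rirr, g ≠ 0 ∧ support g ⊆ support f ∧
      support g ≠ support f := by
    simpa [IsEFM, hf.1, hf0] using hfe
  -- `φ v / v rstar` is monotone along lines, so from `f` it does not increase in one direction `±g`
  obtain ⟨d, hdN, hd0, hdf, hφd⟩ : ∃ d : R → ℝ, N *ᵥ d = 0 ∧ d ≠ 0 ∧ support d ⊂ support f ∧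
      φ d ≤ φ f * d rstar := by
    rcases le_or_gt (φ g) (φ f * g rstar) with h | h
    · exact ⟨g, hg.1, hg0, hgf.ssubset_of_ne hgf', h⟩
    · refine ⟨-g, by rw [mulVec_neg, hg.1, neg_zero], neg_ne_zero.2 hg0,
        by rw [support_neg]; exact hgf.ssubset_of_ne hgf', ?_⟩
      rw [map_neg, Pi.neg_apply]
      linarith
  obtain ⟨a, b, ha, hb, hh0, hhf, hhs⟩ := exists_conforms_smul_add_smul_support_ssubset hd0 hdf
  have hN : N *ᵥ (a • f + b • d) = 0 := by
    rw [mulVec_add, mulVec_smul, mulVec_smul, hf.1.1, hdN, smul_zero, smul_zero, add_zero]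
  have hφh : φ (a • f + b • d) ≤ φ f * (a • f + b • d) rstar := by
    simp only [map_add, map_smul, Pi.add_apply, Pi.smul_apply, smul_eq_mul, hf.2.2]
    nlinarith [mul_le_mul_of_nonneg_left hφd hb]
  obtain ⟨f', hf', hle, hs⟩ := exists_mem_feasibleSet_of_conforms hφ hf hN hhf hh0 hφh
  exact ⟨f', hf', hle, hs ▸ hhs⟩

theorem exists_isEFM_mem_feasibleSet_le
    (hφ : ∀ f ∈ fluxCone N Rirr, Conforms f κ → f ≠ 0 → 0 < φ f) {f : R → ℝ}
    (hf : f ∈ feasibleSet N Rirr κ rstar) :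
    ∃ e, IsEFM N Rirr e ∧ e ∈ feasibleSet N Rirr κ rstar ∧ φ e ≤ φ f := by
  induction hs : support f using WellFoundedLT.induction generalizing f with
  | _ s ih =>
  by_cases hfe : IsEFM N Rirr f
  · exact ⟨f, hfe, hf, le_rfl⟩
  obtain ⟨f', hf', hle, hlt⟩ := exists_mem_feasibleSet_le_support_ssubset hφ hf hfe
  obtain ⟨e, he, hef, hle'⟩ := ih _ (hs ▸ hlt) hf' rfl
  exact ⟨e, he, hef, hle'.trans hle⟩

theorem finite_setOf_isEFM_mem_feasibleSet :
    {e | IsEFM N Rirr e ∧ e ∈ feasibleSet N Rirr κ rstar}.Finite := by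
  refine Set.Finite.of_finite_image (f := support) (Set.toFinite _) fun e he e' he' hs => ?_
  have he0 : e ≠ 0 := fun h => by simpa [h] using he.2.2.2
  obtain ⟨t, -, ht⟩ :=
    he'.1.eq_smul_of_conforms he.2.1.1 he0 (he.2.2.1.of_support_subset he'.2.2.1 hs.subset)
  have ht1 : t = 1 := by simpa [he.2.2.2, he'.2.2.2] using (congrFun ht rstar).symm
  rw [ht, ht1, one_smul]

end FluxCone

section Cost

variable {R : Type*} [Fintype R]

noncomputable def fluxCost (κ w : R → ℝ) : (R → ℝ) →ₗ[ℝ] ℝ where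
  toFun f := ∑ r, w r * f r / κ r
  map_add' f g := by simp only [Pi.add_apply, mul_add, add_div, sum_add_distrib]
  map_smul' c f := by
    rw [RingHom.id_apply, smul_eq_mul, mul_sum]
    exact sum_congr rfl fun r _ => by simp only [Pi.smul_apply, smul_eq_mul]; ring

theorem fluxCost_pos {κ w f : R → ℝ} (hw : ∀ r, 0 < w r) (hf : Conforms f κ) (hf0 : f ≠ 0) :
    0 < fluxCost κ w f := by
  obtain ⟨r, hr⟩ := Function.ne_iff.1 hf0
  show 0 < ∑ r, w r * f r / κ r
  refine sum_pos' (fun r _ => ?_) ⟨r, mem_univ r, ?_⟩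
  · by_cases h : f r = 0
    · simp [h]
    · rw [mul_div_assoc]
      exact (mul_pos (hw r) (hf.div_pos h)).le
  · rw [mul_div_assoc]
    exact mul_pos (hw r) (hf.div_pos hr)

end Cost

theorem fixed_metabolite_min_at_efm_general {S R : Type*} [Fintype R]
    (N : Matrix S R ℝ) (Rirr : Set R) (κ w : R → ℝ) (hw : ∀ r, 0 < w r)
    (rstar : R)
    (hfeas : ∃ f ∈ fluxCone N Rirr, Conforms f κ ∧ f rstar = 1) :
    ∃ e : R → ℝ, IsEFM N Rirr e ∧ Conforms e κ ∧ e rstar = 1 ∧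
      (∀ f ∈ fluxCone N Rirr, Conforms f κ → f rstar = 1 →
        ∑ r, w r * e r / κ r ≤ ∑ r, w r * f r / κ r) ∧
      (∀ e' : R → ℝ, IsEFM N Rirr e' → Conforms e' κ → e' rstar = 1 →
        ∑ r, w r * e r / κ r ≤ ∑ r, w r * e' r / κ r) := by
  have hφ : ∀ f ∈ fluxCone N Rirr, Conforms f κ → f ≠ 0 → 0 < fluxCost κ w f :=
    fun _ _ hf hf0 => fluxCost_pos hw hf hf0
  obtain ⟨f₀, hf₀⟩ := hfeas
  obtain ⟨e₀, he₀, he₀f, -⟩ := exists_isEFM_mem_feasibleSet_le hφ hf₀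
  obtain ⟨e, ⟨he, -, heκ, he1⟩, hmin⟩ :=
    Set.exists_min_image _ (fluxCost κ w) finite_setOf_isEFM_mem_feasibleSet ⟨e₀, he₀, he₀f⟩
  refine ⟨e, he, heκ, he1, fun f hf hfκ hf1 => ?_,
    fun e' he' he'κ he'1 => hmin e' ⟨he', he'.1, he'κ, he'1⟩⟩
  obtain ⟨e', he', he'f, hle⟩ := exists_isEFM_mem_feasibleSet_le hφ ⟨hf, hfκ, hf1⟩
  exact (hmin e' ⟨he', he'f⟩).trans hle

/-- fixed-metabolite optimality: if the problem of minimizing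
`∑ r, w r * f r / κ r` over flux modes `f` conforming to `σ(κ)` with
`f rstar = 1` is feasible, then the minimum is attained at an EFM, and the
minimal value equals the minimum of the cost over all such EFMs.  (Terms with
`κ r = 0` vanish since `f r = 0` there, so the total sum equals the sum over
`supp κ`.) -/
theorem fixed_metabolite_min_at_efm {S R : Type*} [Fintype S] [Fintype R]
    (N : Matrix S R ℝ) (Rirr : Set R) (κ w : R → ℝ) (hw : ∀ r, 0 < w r)
    (rstar : R)
    (hfeas : ∃ f ∈ fluxCone N Rirr, Conforms f κ ∧ f rstar = 1) :
    ∃ e : R → ℝ, IsEFM N Rirr e ∧ Conforms e κ ∧ e rstar = 1 ∧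
      (∀ f ∈ fluxCone N Rirr, Conforms f κ → f rstar = 1 →
        ∑ r, w r * e r / κ r ≤ ∑ r, w r * f r / κ r) ∧
      (∀ e' : R → ℝ, IsEFM N Rirr e' → Conforms e' κ → e' rstar = 1 →
        ∑ r, w r * e r / κ r ≤ ∑ r, w r * e' r / κ r) :=
  fixed_metabolite_min_at_efm_general N Rirr κ w hw rstar hfeas
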